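/- There is a constant C > 0 such that for all λ > 0, all t ∈ (0, T], and all s > 0, the derivative of s ↦ exp(-λ^s t) satisfies |d/ds exp(-λ^s t)| ≤ C s^{-1} (1 + |ln t|). -/

import Mathlib

/-!
With `u = λ^s t` the derivative is `-u e^{-u} ln λ`, and `s ln λ = ln u - ln t`. Hence
`s |d/ds e^{-λ^s t}| ≤ u e^{-u} |ln u| + u e^{-u} |ln t|`, and both `u e^{-u}` and
`u e^{-u} |ln u|` are bounded on `(0, ∞)`; this gives `C = 3`.
-/

open Real

namespace Real

lemma mul_exp_neg_le_one (u : ℝ) : u * exp (-u) ≤ 1 := by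
  rw [exp_neg, mul_inv_le_iff₀ (exp_pos u), one_mul]
  linarith [add_one_le_exp u]

lemma sq_mul_exp_neg_le_two {u : ℝ} (hu : 0 ≤ u) : u ^ 2 * exp (-u) ≤ 2 := by
  have h := pow_div_factorial_le_exp u hu 2
  rw [Nat.factorial_two, Nat.cast_ofNat, div_le_iff₀ two_pos] at h
  rw [exp_neg, mul_inv_le_iff₀ (exp_pos u)]
  linarith

lemma abs_log_le_add_inv {u : ℝ} (hu : 0 < u) : |log u| ≤ u + u⁻¹ := by
  have hle := log_le_sub_one_of_pos hu
  have hge := log_le_sub_one_of_pos (inv_pos.mpr hu)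
  rw [log_inv] at hge
  rw [abs_le]
  constructor <;> linarith [inv_pos.mpr hu]

lemma mul_exp_neg_mul_abs_log_le_three {u : ℝ} (hu : 0 < u) :
    u * exp (-u) * |log u| ≤ 3 := by
  calc u * exp (-u) * |log u| ≤ u * exp (-u) * (u + u⁻¹) := by
        gcongr; exact abs_log_le_add_inv hu
    _ = u ^ 2 * exp (-u) + exp (-u) := by field_simp
    _ ≤ 2 + 1 := by
        gcongr
        · exact sq_mul_exp_neg_le_two hu.le
        · exact exp_le_one_iff.mpr (neg_nonpos.mpr hu.le)
    _ = 3 := by norm_num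

lemma hasDerivAt_exp_neg_rpow_mul {l : ℝ} (hl : 0 < l) (t s : ℝ) :
    HasDerivAt (fun s : ℝ => exp (-(l ^ s * t)))
      (-(l ^ s * t * exp (-(l ^ s * t)) * log l)) s := by
  have hinner : HasDerivAt (fun s : ℝ => -(l ^ s * t)) (-(l ^ s * log l * t)) s :=
    ((hasStrictDerivAt_const_rpow hl s).hasDerivAt.mul_const t).neg
  convert hinner.exp using 1
  ring

end Real

theorem first_deriv_E_bound_general (T : ℝ) :
    ∃ C > 0, ∀ l : ℝ, 0 < l → ∀ t ∈ Set.Ioc (0 : ℝ) T, ∀ s : ℝ, 0 < s →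
      |deriv (fun s : ℝ => Real.exp (-(l ^ s * t))) s| ≤ C * s⁻¹ * (1 + |Real.log t|) := by
  refine ⟨3, three_pos, fun l hl t ⟨ht, _⟩ s hs => ?_⟩
  rw [(hasDerivAt_exp_neg_rpow_mul hl t s).deriv]
  set u := l ^ s * t
  have hu : 0 < u := mul_pos (rpow_pos_of_pos hl s) ht
  have hlog : s * log l = log u - log t := by
    rw [log_mul (rpow_pos_of_pos hl s).ne' ht.ne', log_rpow hl]; ring
  have hue : 0 ≤ u * exp (-u) := by positivity
  have hscaled : s * |-(u * exp (-u) * log l)| ≤ 3 * (1 + |log t|) :=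
    calc s * |-(u * exp (-u) * log l)| = u * exp (-u) * |log u - log t| := by
          rw [abs_neg, abs_mul, abs_of_nonneg hue, ← hlog, abs_mul, abs_of_pos hs]; ring
      _ ≤ u * exp (-u) * |log u| + u * exp (-u) * |log t| := by
          rw [← mul_add]; exact mul_le_mul_of_nonneg_left (abs_sub _ _) hue
      _ ≤ 3 + 1 * |log t| := by
          gcongr
          · exact mul_exp_neg_mul_abs_log_le_three hu
          · exact mul_exp_neg_le_one u
      _ ≤ 3 * (1 + |log t|) := by linarith [abs_nonneg (log t)]
  rw [show 3 * s⁻¹ * (1 + |log t|) = s⁻¹ * (3 * (1 + |log t|)) by ring, le_inv_mul_iff₀ hs]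
  exact hscaled

theorem first_deriv_E_bound (T : ℝ) (hT : 0 < T) :
    ∃ C > 0, ∀ l : ℝ, 0 < l → ∀ t ∈ Set.Ioc (0 : ℝ) T, ∀ s : ℝ, 0 < s →
      |deriv (fun s : ℝ => Real.exp (-(l ^ s * t))) s| ≤ C * s⁻¹ * (1 + |Real.log t|) :=
  first_deriv_E_bound_general T
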